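/- For every integer n ≥ 0, as real s → ∞, ζ(s) - Q_n(s) is asymptotically equivalent to p_{n+1}^{-s}; i.e., lim_{s→∞} p_{n+1}^s (ζ(s) - Q_n(s)) = 1. -/

import Mathlib

open Filter Real

noncomputable def zetaR (s : ℝ) : ℝ := ∑' m : ℕ, (m : ℝ) ^ (-s)

/-- `P k` is the (k+1)-st prime: `P 0 = 2`, `P 1 = 3`, ... -/
noncomputable def P (k : ℕ) : ℕ := Nat.nth Nat.Prime k

/-- Partial Euler product `Q n s = ∏_{k=1}^n (1 - p_k^{-s})⁻¹`. -/
noncomputable def Q (n : ℕ) (s : ℝ) : ℝ := ∏ k ∈ Finset.range n, (1 - (P k : ℝ) ^ (-s))⁻¹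

/-! By the Euler product, `Q n s` is the sum of `m ^ (-s)` over the `p`-smooth numbers `m`, where
`p = P n`. Hence `p ^ s * (zetaR s - Q n s)` is the sum of `(p / m) ^ s` over the remaining `m`,
each of which is `0` or at least `p`, with `p / m = 1` only for `m = p`. Dominated convergence,
with the terms at `s = 2` as the bound, sends this sum to `1` as `s → ∞`. -/

open Topology

lemma Nat.primesBelow_nth_prime (n : ℕ) :
    (Nat.nth Nat.Prime n).primesBelow =
      (Finset.range n).map ⟨Nat.nth Nat.Prime, Nat.nth_injective Nat.infinite_setOfPred_prime⟩ := by
  ext q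
  simp only [Nat.mem_primesBelow, Finset.mem_map, Finset.mem_range, Function.Embedding.coeFn_mk]
  constructor
  · rintro ⟨hlt, hq⟩
    refine ⟨Nat.count Nat.Prime q, ?_, Nat.nth_count hq⟩
    rwa [← Nat.nth_lt_nth Nat.infinite_setOfPred_prime, Nat.nth_count hq]
  · rintro ⟨k, hk, rfl⟩
    exact ⟨(Nat.nth_lt_nth Nat.infinite_setOfPred_prime).mpr hk, Nat.prime_nth_prime k⟩

noncomputable def natCastRpowNegHom (s : ℝ) : ℕ →* ℝ where
  toFun m := (m : ℝ) ^ (-s)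
  map_one' := by simp
  map_mul' x y := by
    push_cast
    exact Real.mul_rpow x.cast_nonneg y.cast_nonneg

lemma Q_eq_tsum_smoothNumbers (n : ℕ) {s : ℝ} (hs : 1 < s) :
    Q n s = ∑' m : (P n).smoothNumbers, ((m : ℕ) : ℝ) ^ (-s) := by
  have hsum : Summable (natCastRpowNegHom s) := Real.summable_nat_rpow.mpr (by linarith)
  refine Eq.trans ?_ (EulerProduct.prod_primesBelow_geometric_eq_tsum_smoothNumbers hsum _)
  rw [P, Nat.primesBelow_nth_prime, Finset.prod_map]
  rfl

lemma Real.rpow_mul_rpow_neg {x y : ℝ} (hx : 0 ≤ x) (hy : 0 ≤ y) (s : ℝ) :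
    x ^ s * y ^ (-s) = (x / y) ^ s := by
  rw [Real.div_rpow hx hy, Real.rpow_neg hy, div_eq_mul_inv]

lemma rpow_mul_zetaR_sub_Q (n : ℕ) {s : ℝ} (hs : 1 < s) :
    (P n : ℝ) ^ s * (zetaR s - Q n s) =
      ∑' m : ↥((P n).smoothNumbers)ᶜ, ((P n : ℝ) / (m : ℕ)) ^ s := by
  have hsum : Summable fun m : ℕ => (m : ℝ) ^ (-s) := Real.summable_nat_rpow.mpr (by linarith)
  rw [zetaR, ← hsum.tsum_subtype_add_tsum_subtype_compl (P n).smoothNumbers,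
    ← Q_eq_tsum_smoothNumbers n hs, add_sub_cancel_left, ← tsum_mul_left]
  simp only [Real.rpow_mul_rpow_neg (Nat.cast_nonneg _) (Nat.cast_nonneg _)]

lemma tendsto_tsum_rpow_atTop {ι : Type*} {f : ι → ℝ} (hf₀ : ∀ i, 0 ≤ f i) (hf₁ : ∀ i, f i ≤ 1)
    {s₀ : ℝ} (hs₀ : Summable fun i => f i ^ s₀) :
    Tendsto (fun s : ℝ => ∑' i, f i ^ s) atTop (𝓝 (∑' i, if f i = 1 then 1 else 0)) := by
  refine tendsto_tsum_of_dominated_convergence hs₀ (fun i => ?_) ?_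
  · split_ifs with h
    · simp only [h, Real.one_rpow]
      exact tendsto_const_nhds
    · exact tendsto_rpow_atTop_of_base_lt_one _ (by linarith [hf₀ i]) (lt_of_le_of_ne (hf₁ i) h)
  · filter_upwards [eventually_ge_atTop s₀, eventually_gt_atTop 0] with s hs₀s hs i
    rw [Real.norm_of_nonneg (Real.rpow_nonneg (hf₀ i) s)]
    rcases (hf₀ i).eq_or_lt with h | h
    · rw [← h, Real.zero_rpow hs.ne']
      exact Real.rpow_nonneg le_rfl s₀
    · exact Real.rpow_le_rpow_of_exponent_ge h (hf₁ i) hs₀s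

lemma Nat.le_of_notMem_smoothNumbers {n m : ℕ} (hm : m ∉ n.smoothNumbers) (hm₀ : m ≠ 0) :
    n ≤ m :=
  not_lt.mp fun h => hm (Nat.mem_smoothNumbers_of_lt (Nat.pos_of_ne_zero hm₀) h)

lemma Nat.Prime.notMem_smoothNumbers_self {p : ℕ} (hp : p.Prime) : p ∉ p.smoothNumbers :=
  fun h => lt_irrefl p (Nat.mem_smoothNumbers'.mp h p hp dvd_rfl)

theorem zeta_sub_Q_asymptotic (n : ℕ) :
    Tendsto (fun s : ℝ => (P n : ℝ) ^ s * (zetaR s - Q n s)) atTop (nhds 1) := by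
  set p := P n
  have hp : p.Prime := Nat.prime_nth_prime n
  set f : ↥(p.smoothNumbers)ᶜ → ℝ := fun m => (p : ℝ) / (m : ℕ)
  have hf₀ (m) : 0 ≤ f m := by positivity
  have hf₁ (m : ↥(p.smoothNumbers)ᶜ) : f m ≤ 1 := by
    rcases eq_or_ne (m : ℕ) 0 with h | h
    · simp [f, h]
    · exact div_le_one_of_le₀ (by exact_mod_cast Nat.le_of_notMem_smoothNumbers m.2 h)
        (Nat.cast_nonneg _)
  have hf_sq : Summable fun m => f m ^ (2 : ℝ) := by
    have h := (Real.summable_nat_rpow.mpr (by norm_num : -(2 : ℝ) < -1)).mul_left ((p : ℝ) ^ (2 : ℝ))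
    simp only [Real.rpow_mul_rpow_neg (Nat.cast_nonneg _) (Nat.cast_nonneg _)] at h
    exact h.subtype _
  have hf_eq_one (m : ↥(p.smoothNumbers)ᶜ) : f m = 1 ↔ m = ⟨p, hp.notMem_smoothNumbers_self⟩ := by
    rcases eq_or_ne (m : ℕ) 0 with h | h
    · simp [f, h, Subtype.ext_iff, hp.ne_zero.symm]
    · rw [div_eq_one_iff_eq (Nat.cast_ne_zero.mpr h : ((m : ℕ) : ℝ) ≠ 0), Subtype.ext_iff,
        Nat.cast_inj, eq_comm]
  have hlim := tendsto_tsum_rpow_atTop hf₀ hf₁ hf_sq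
  simp only [hf_eq_one, tsum_ite_eq] at hlim
  refine hlim.congr' ?_
  filter_upwards [eventually_gt_atTop 1] with s hs
  exact (rpow_mul_zetaR_sub_Q n hs).symm
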